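/- arXiv:2002.10870 — 3 statements merged into one kernel-verified Lean document; each statement's English description precedes it below -/
import Mathlib

section
/- Let G = (V, E) be an AMP chain graph and let X, Y, Z be three pairwise disjoint subsets of V with Z ⊆ ant(X ∪ Y). Let H = G_{ant(X∪Y)} be the induced subgraph of G on ant(X ∪ Y). Then Z separates X from Y in G (i.e., ⟨X, Y | Z⟩_G holds) if and only if Z separates X from Y in H (i.e., ⟨X, Y | Z⟩_H holds). -/
/-! # AMP chain graphs: basic definitions -/

/-- A mixed graph on vertex set `V`: directed edges `dir a b` (meaning `a → b`) and
undirected edges `undir a b` (meaning `a – b`, a symmetric relation). -/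
structure MixedGraph (V : Type*) where
  dir : V → V → Prop
  undir : V → V → Prop
  undir_symm : ∀ a b, undir a b → undir b a

namespace MixedGraph

variable {V : Type*} (G : MixedGraph V)

/-- A semi-directed step from `a` to `b`: either `a – b` or `a → b`. -/
def SemiStep (a b : V) : Prop := G.undir a b ∨ G.dir a b

/-- `a` and `b` are joined by an edge of either type, in either orientation. -/
def Link (a b : V) : Prop := G.dir a b ∨ G.dir b a ∨ G.undir a b

/-- `G` contains a partially directed (semi-directed) cycle: a sequence of `n ≥ 3`
distinct vertices `v₁, …, vₙ` (with `v_{n+1} = v₁`) such that every consecutive pair is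
joined by `vᵢ – v_{i+1}` or `vᵢ → v_{i+1}`, and at least one consecutive pair satisfies
`vⱼ → v_{j+1}`. -/
def HasPDCycle : Prop :=
  ∃ (v : V) (l : List V), 2 ≤ l.length ∧ (v :: l).Nodup ∧
    List.Chain G.SemiStep v (l ++ [v]) ∧
    ∃ p ∈ (v :: (l ++ [v])).zip (l ++ [v]), G.dir p.1 p.2

/-- An AMP chain graph is a mixed graph with no partially directed cycle. -/
def IsAMPCG : Prop := ¬ G.HasPDCycle

/-- `a` is anterior to `b`: `a = b` or there is a chain from `a` to `b` on which every
directed edge points toward `b` (reachability by semi-directed steps). -/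
def AnteriorTo (a b : V) : Prop := Relation.ReflTransGen G.SemiStep a b

/-- The set of anteriors of a set `A`. -/
def ant (A : Set V) : Set V := {a | ∃ b ∈ A, G.AnteriorTo a b}

/-- `a` is an ancestor of `b`: there is a directed path `a → ⋯ → b`. -/
def AncestorOf (a b : V) : Prop := Relation.TransGen G.dir a b

/-- `An A = A ∪ {ancestors of vertices of A}`. -/
def An (A : Set V) : Set V := A ∪ {a | ∃ b ∈ A, G.AncestorOf a b}

/-- `a` and `b` lie in the same chain component (connected component of the graph of
undirected edges). -/
def SameComponent (a b : V) : Prop := Relation.ReflTransGen G.undir a b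

/-- `Co A`: the union of the chain components that intersect `A`. -/
def Co (A : Set V) : Set V := {v | ∃ a ∈ A, G.SameComponent v a}

/-- The induced subgraph `G_A`: keep exactly the edges with both endpoints in `A`. -/
def induce (A : Set V) : MixedGraph V where
  dir a b := G.dir a b ∧ a ∈ A ∧ b ∈ A
  undir a b := G.undir a b ∧ a ∈ A ∧ b ∈ A
  undir_symm a b h := ⟨G.undir_symm a b h.1, h.2.2, h.2.1⟩

/-- `Ḡ`: the graph obtained from `G` by deleting all directed edges. -/
def undirPart : MixedGraph V where
  dir _ _ := False
  undir := G.undir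
  undir_symm := G.undir_symm

/-- Edge-wise union of two mixed graphs. -/
def union (G₁ G₂ : MixedGraph V) : MixedGraph V where
  dir a b := G₁.dir a b ∨ G₂.dir a b
  undir a b := G₁.undir a b ∨ G₂.undir a b
  undir_symm a b h := h.imp (G₁.undir_symm a b) (G₂.undir_symm a b)

/-- The extended subgraph `G[A] = G_{An(A)} ∪ Ḡ_{Co(An(A))}`. -/
def extendedSub (A : Set V) : MixedGraph V :=
  union (G.induce (G.An A)) (G.undirPart.induce (G.Co (G.An A)))

/-- The only edge between `a` and `b` is `a → b`. -/
def onlyDir (a b : V) : Prop := G.dir a b ∧ ¬ G.dir b a ∧ ¬ G.undir a b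

/-- The only edge between `a` and `b` is `a – b`. -/
def onlyUndir (a b : V) : Prop := G.undir a b ∧ ¬ G.dir a b ∧ ¬ G.dir b a

/-- There is no edge between `a` and `b`. -/
def noEdge (a b : V) : Prop := ¬ G.dir a b ∧ ¬ G.dir b a ∧ ¬ G.undir a b

/-- `(x, y, z)` forms a triplex: the induced subgraph on `{x, y, z}` is
`x → y – z`, `x → y ← z`, or `x – y ← z`. -/
def Triplex (x y z : V) : Prop :=
  x ≠ y ∧ y ≠ z ∧ x ≠ z ∧ G.noEdge x z ∧
    ((G.onlyDir x y ∧ G.onlyUndir y z) ∨ (G.onlyDir x y ∧ G.onlyDir z y) ∨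
      (G.onlyUndir x y ∧ G.onlyDir z y))

/-- `(x, a, b, y)` forms a bi-flag: four distinct vertices with the edges
`x → a`, `y → b`, and `a – b` present. -/
def BiFlag (x a b y : V) : Prop :=
  x ≠ a ∧ x ≠ b ∧ x ≠ y ∧ a ≠ b ∧ a ≠ y ∧ b ≠ y ∧
    G.dir x a ∧ G.dir y b ∧ G.undir a b

/-- Adjacency in the augmented graph `G^a`: every edge of `G` made undirected, plus an
edge `x – z` for every triplex `{x, y, z}` and an edge `x – y` for every bi-flag
`{x, a, b, y}`. -/
def AugAdj (a b : V) : Prop :=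
  a ≠ b ∧
    (G.Link a b ∨ (∃ y, G.Triplex a y b ∨ G.Triplex b y a) ∨
      (∃ p q, G.BiFlag a p q b ∨ G.BiFlag b p q a))

/-- The set of parents of `b`. -/
def pa (b : V) : Set V := {a | G.dir a b}

end MixedGraph

/-- In an undirected graph given by the adjacency relation `adj`, the set `Z` separates
`X` from `Y`: every path from a vertex of `X` to a vertex of `Y` intersects `Z`. -/
def Separates {V : Type*} (adj : V → V → Prop) (X Y Z : Set V) : Prop :=
  ∀ x ∈ X, ∀ y ∈ Y, ∀ l : List V,
    List.Chain adj x l → (x :: l).getLast? = some y → (x :: l).Nodup →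
      ∃ w ∈ x :: l, w ∈ Z

namespace MixedGraph

variable {V : Type*} (G : MixedGraph V)

/-- `⟨X, Y | Z⟩_G`: `Z` separates `X` from `Y` in the undirected graph
`(G[X ∪ Y ∪ Z])^a`. -/
def PSep (X Y Z : Set V) : Prop :=
  Separates (G.extendedSub (X ∪ Y ∪ Z)).AugAdj X Y Z

/-- `l` is a chain from `u` to `v` in `G`: a list of distinct vertices starting at `u`,
ending at `v`, each consecutive pair joined by an edge of `G` (of either type, in
either orientation). -/
def IsChainBetween (u v : V) (l : List V) : Prop :=
  l.Nodup ∧ l.Chain' G.Link ∧ l.head? = some u ∧ l.getLast? = some v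

end MixedGraph

/-- The list of consecutive triples of a list. -/
def consecTriples {V : Type*} (l : List V) : List (V × V × V) :=
  l.zip (l.tail.zip l.tail.tail)

namespace MixedGraph

variable {V : Type*} (G : MixedGraph V)

/-- `b` is a triplex node in the chain `l`: `a → b ← c`, `a → b – c`, or `a – b ← c` is
a subchain of `l`. -/
def TriplexNodeIn (l : List V) (b : V) : Prop :=
  ∃ t ∈ consecTriples l, t.2.1 = b ∧
    ((G.dir t.1 b ∧ G.dir t.2.2 b) ∨ (G.dir t.1 b ∧ G.undir b t.2.2) ∨
      (G.undir t.1 b ∧ G.dir t.2.2 b))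

/-- The chain `l` is `Z`-open: every triplex node of `l` is in `An(Z)`, and every
non-triplex node `b` of `l` is outside `Z`, unless `a – b – c` is a subchain of `l` and
`pa(b) \ Z ≠ ∅`. -/
def ZOpen (Z : Set V) (l : List V) : Prop :=
  (∀ b, G.TriplexNodeIn l b → b ∈ G.An Z) ∧
  (∀ b ∈ l, ¬ G.TriplexNodeIn l b → b ∈ Z →
    (∃ t ∈ consecTriples l, t.2.1 = b ∧ G.undir t.1 b ∧ G.undir b t.2.2) ∧
      (G.pa b \ Z).Nonempty)

end MixedGraph

/-- The union of the node sets of the subtree of `T - e` containing `i`. -/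
def subtreeUnion {V ι : Type*} (T : SimpleGraph ι) (C : ι → Set V) (e : Sym2 ι)
    (i : ι) : Set V :=
  ⋃ k ∈ {k | (T.deleteEdges {e}).Reachable i k}, C k

/-- `T` (a tree on index type `ι` with node sets `C i ⊆ V` covering `V`) is a
p-separation tree for the mixed graph `G`: for every edge `{i, j}` of `T` with
separator `S = C i ∩ C j`, if `V₁` and `V₂` are the unions of the node sets of the two
subtrees obtained by removing that edge, then `⟨V₁ \ S, V₂ \ S | S⟩_G` holds. -/
def IsPSepTree {V ι : Type*} (G : MixedGraph V) (T : SimpleGraph ι) (C : ι → Set V) :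
    Prop :=
  T.IsTree ∧ (∀ v : V, ∃ i, v ∈ C i) ∧
    ∀ i j, T.Adj i j →
      G.PSep (subtreeUnion T C s(i, j) i \ (C i ∩ C j))
        (subtreeUnion T C s(i, j) j \ (C i ∩ C j))
        (C i ∩ C j)

/-- An undirected graph `U` is an undirected independence graph (UIG) for `G`:
whenever `Z` separates `X` from `Y` in `U` (for pairwise disjoint `X`, `Y`, `Z`),
`⟨X, Y | Z⟩_G` holds. -/
def IsUIG {V : Type*} (G : MixedGraph V) (U : SimpleGraph V) : Prop :=
  ∀ X Y Z : Set V, Disjoint X Y → Disjoint X Z → Disjoint Y Z →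
    Separates U.Adj X Y Z → G.PSep X Y Z

/-- `Z` is a minimal separator for `X` and `Y` in the mixed graph `G`:
`⟨X, Y | Z⟩_G` holds and `⟨X, Y | Z'⟩_G` fails for every proper subset `Z' ⊊ Z`. -/
def IsMinimalSeparator {V : Type*} (G : MixedGraph V) (X Y Z : Set V) : Prop :=
  G.PSep X Y Z ∧ ∀ Z' ⊂ Z, ¬ G.PSep X Y Z'

/-- The consecutive pairs of a list read cyclically. -/
def cyclicPairs {V : Type*} (l : List V) : List (V × V) :=
  (l ++ l.take 1).zip (l ++ l.take 1).tail

/-- An undirected graph is chordal (triangulated) if every cycle of four or more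
vertices has a chord: an edge joining two non-consecutive vertices of the cycle. -/
def IsChordal {V : Type*} (H : SimpleGraph V) : Prop :=
  ∀ l : List V, 4 ≤ l.length → l.Nodup →
    (∀ p ∈ cyclicPairs l, H.Adj p.1 p.2) →
    ∃ a ∈ l, ∃ b ∈ l, H.Adj a b ∧ (a, b) ∉ cyclicPairs l ∧ (b, a) ∉ cyclicPairs l

/-- `T` (with node sets `C`) is a junction tree of the cliques of the graph `H`:
its nodes are exactly the maximal cliques of `H` (each appearing once), and it has the
running intersection property: `C i ∩ C j` is contained in every node on the unique
path between `i` and `j` in `T`. -/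
def IsJunctionTree {V ι : Type*} (H : SimpleGraph V) (T : SimpleGraph ι)
    (C : ι → Set V) : Prop :=
  T.IsTree ∧ Function.Injective C ∧ (∀ i, Maximal H.IsClique (C i)) ∧
    (∀ s : Set V, Maximal H.IsClique s → ∃ i, C i = s) ∧
    ∀ (i j k : ι) (p : T.Walk i j), p.IsPath → k ∈ p.support → C i ∩ C j ⊆ C k

/-! A set `S` that contains the tail of every edge `a → b` or `a – b` whose head `b` lies in `S`
(such as `ant(X ∪ Y)`) contains `An(A)` and `Co(An(A))` for every `A ⊆ S`, and the directed and
undirected paths defining these sets stay inside `S`. So for `A = X ∪ Y ∪ Z` the extended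
subgraphs `G[A]` and `H[A]` are literally the same mixed graph, and hence so are their
augmented graphs. -/

namespace Relation

variable {α : Type*} {r : α → α → Prop} {S : Set α}

lemma ReflTransGen.mem_of_closed (hS : ∀ ⦃a b⦄, r a b → b ∈ S → a ∈ S) {a b : α}
    (h : ReflTransGen r a b) (hb : b ∈ S) : a ∈ S := by
  induction h using ReflTransGen.head_induction_on with
  | refl => exact hb
  | head hac _ ih => exact hS hac ih

lemma ReflTransGen.restrict_of_closed (hS : ∀ ⦃a b⦄, r a b → b ∈ S → a ∈ S) {a b : α}
    (h : ReflTransGen r a b) (hb : b ∈ S) :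
    ReflTransGen (fun x y ↦ r x y ∧ x ∈ S ∧ y ∈ S) a b := by
  induction h using ReflTransGen.head_induction_on with
  | refl => exact .refl
  | head hac hcb ih =>
    have hc := hcb.mem_of_closed hS hb
    exact .head ⟨hac, hS hac hc, hc⟩ ih

lemma TransGen.restrict_of_closed (hS : ∀ ⦃a b⦄, r a b → b ∈ S → a ∈ S) {a b : α}
    (h : TransGen r a b) (hb : b ∈ S) :
    TransGen (fun x y ↦ r x y ∧ x ∈ S ∧ y ∈ S) a b := by
  induction h using TransGen.head_induction_on with
  | single hab => exact .single ⟨hab, hS hab hb, hb⟩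
  | head hac hcb ih =>
    have hc := hcb.to_reflTransGen.mem_of_closed hS hb
    exact .head ⟨hac, hS hac hc, hc⟩ ih

end Relation

namespace MixedGraph

variable {V : Type*} (G : MixedGraph V)

@[ext]
lemma ext {G₁ G₂ : MixedGraph V} (hd : G₁.dir = G₂.dir) (hu : G₁.undir = G₂.undir) :
    G₁ = G₂ := by
  cases G₁; cases G₂; cases hd; cases hu; rfl

lemma subset_ant (W : Set V) : W ⊆ G.ant W :=
  fun w hw ↦ ⟨w, hw, .refl⟩

lemma mem_ant_of_semiStep {W : Set V} {a b : V} (h : G.SemiStep a b) (hb : b ∈ G.ant W) :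
    a ∈ G.ant W :=
  let ⟨c, hc, hbc⟩ := hb
  ⟨c, hc, .head h hbc⟩

variable {S A : Set V}

lemma an_subset (hS : ∀ ⦃a b⦄, G.dir a b → b ∈ S → a ∈ S) (hA : A ⊆ S) : G.An A ⊆ S := by
  rintro a (ha | ⟨b, hb, hab⟩)
  exacts [hA ha, hab.to_reflTransGen.mem_of_closed hS (hA hb)]

lemma co_subset (hS : ∀ ⦃a b⦄, G.undir a b → b ∈ S → a ∈ S) (hA : A ⊆ S) : G.Co A ⊆ S :=
  fun _ ⟨_, hb, hab⟩ ↦ hab.mem_of_closed hS (hA hb)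

lemma an_induce (hS : ∀ ⦃a b⦄, G.dir a b → b ∈ S → a ∈ S) (hA : A ⊆ S) :
    (G.induce S).An A = G.An A := by
  ext a
  refine or_congr_right
    ⟨fun ⟨b, hb, hab⟩ ↦ ⟨b, hb, Relation.TransGen.mono (fun _ _ ↦ And.left) _ _ hab⟩,
    fun ⟨b, hb, hab⟩ ↦ ⟨b, hb, hab.restrict_of_closed hS (hA hb)⟩⟩

lemma co_induce (hS : ∀ ⦃a b⦄, G.undir a b → b ∈ S → a ∈ S) (hA : A ⊆ S) :
    (G.induce S).Co A = G.Co A := by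
  ext a
  exact ⟨fun ⟨b, hb, hab⟩ ↦ ⟨b, hb, Relation.ReflTransGen.mono (fun _ _ ↦ And.left) _ _ hab⟩,
    fun ⟨b, hb, hab⟩ ↦ ⟨b, hb, hab.restrict_of_closed hS (hA hb)⟩⟩

variable {T : Set V}

lemma induce_induce_of_subset (h : T ⊆ S) : (G.induce S).induce T = G.induce T := by
  ext a b <;> simp only [induce] <;> grind

lemma undirPart_induce : (G.induce S).undirPart = G.undirPart.induce S := by
  ext a b <;> simp [undirPart, induce]

lemma extendedSub_induce (hS : ∀ ⦃a b⦄, G.SemiStep a b → b ∈ S → a ∈ S) (hA : A ⊆ S) :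
    (G.induce S).extendedSub A = G.extendedSub A := by
  have hdir : ∀ ⦃a b⦄, G.dir a b → b ∈ S → a ∈ S := fun _ _ h ↦ hS (.inr h)
  have hundir : ∀ ⦃a b⦄, G.undir a b → b ∈ S → a ∈ S := fun _ _ h ↦ hS (.inl h)
  have hAnS := G.an_subset hdir hA
  rw [extendedSub, extendedSub, G.an_induce hdir hA, G.co_induce hundir hAnS,
    G.undirPart_induce, G.induce_induce_of_subset hAnS,
    G.undirPart.induce_induce_of_subset (G.co_subset hundir hAnS)]

end MixedGraph

theorem amp_psep_iff_psep_induce_ant_general {V : Type*} (G : MixedGraph V)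
    (X Y Z : Set V)
    (hZant : Z ⊆ G.ant (X ∪ Y)) :
    G.PSep X Y Z ↔ (G.induce (G.ant (X ∪ Y))).PSep X Y Z := by
  have hXYZ : X ∪ Y ∪ Z ⊆ G.ant (X ∪ Y) := Set.union_subset (G.subset_ant _) hZant
  rw [MixedGraph.PSep, MixedGraph.PSep,
    G.extendedSub_induce (fun _ _ ↦ G.mem_ant_of_semiStep) hXYZ]

/-- **Proposition 1.** Let `G` be an AMP chain graph and let `X, Y, Z` be three
pairwise disjoint subsets of `V` with `Z ⊆ ant(X ∪ Y)`, and let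
`H = G_{ant(X ∪ Y)}` be the induced subgraph of `G` on `ant(X ∪ Y)`.
Then `⟨X, Y | Z⟩_G` holds if and only if `⟨X, Y | Z⟩_H` holds. -/
theorem amp_psep_iff_psep_induce_ant {V : Type*} (G : MixedGraph V) (hG : G.IsAMPCG)
    (X Y Z : Set V) (hXY : Disjoint X Y) (hXZ : Disjoint X Z) (hYZ : Disjoint Y Z)
    (hZant : Z ⊆ G.ant (X ∪ Y)) :
    G.PSep X Y Z ↔ (G.induce (G.ant (X ∪ Y))).PSep X Y Z :=
  amp_psep_iff_psep_induce_ant_general G X Y Z hZant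
end

section
/- Let u and v be two non-adjacent vertices of an AMP chain graph G, and let ρ be a chain from u to v in G. If ρ is not contained in ant({u} ∪ {v}), then for every subset S of ant({u} ∪ {v}) \ {u, v}, the chain ρ is not S-open (i.e., ρ is blocked by S). -/
/-
If `ρ` is `S`-open, its triplex nodes lie in `An S ⊆ ant {u, v}`, so it suffices to find a
triplex node of `ρ` outside `A := ant {u, v}`. The set `A` is closed under stepping back along
`–` and `→`. Walk along `ρ` from `u ∈ A` to the first vertex `b ∉ A`: the edge into `b` must be
`a → b`. Keep following forward-directed edges, which stay outside `A`; since `ρ` ends at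
`v ∈ A`, some outside vertex is eventually left by an edge `b ← c` or `b – c`, and then `b` is a
triplex node.
-/

namespace MixedGraph

variable {V : Type*} {G : MixedGraph V}

/-- Anterial sets (`ant A = A`), phrased as closure under one backward semi-directed step. -/
def IsAnterial (G : MixedGraph V) (A : Set V) : Prop :=
  ∀ ⦃x y⦄, G.SemiStep x y → y ∈ A → x ∈ A

lemma isAnterial_ant (A : Set V) : G.IsAnterial (G.ant A) := by
  rintro x y hxy ⟨c, hc, hyc⟩
  exact ⟨c, hc, .head hxy hyc⟩

lemma mem_ant_of_mem {A : Set V} {a : V} (ha : a ∈ A) : a ∈ G.ant A :=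
  ⟨a, ha, .refl⟩

lemma IsAnterial.An_subset {A S : Set V} (hA : G.IsAnterial A) (hS : S ⊆ A) :
    G.An S ⊆ A := by
  rintro a (ha | ⟨b, hb, hab⟩)
  · exact hS ha
  · induction hab using Relation.TransGen.head_induction_on with
    | single h => exact hA (Or.inr h) (hS hb)
    | head h _ ih => exact hA (Or.inr h) ih

lemma IsAnterial.dir_of_link {A : Set V} (hA : G.IsAnterial A) {a b : V} (hab : G.Link a b)
    (ha : a ∈ A) (hb : b ∉ A) : G.dir a b := by
  rcases hab with h | h | h
  · exact h
  · exact absurd (hA (Or.inr h) ha) hb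
  · exact absurd (hA (Or.inl (G.undir_symm a b h)) ha) hb

lemma TriplexNodeIn.cons {l : List V} {b : V} (h : G.TriplexNodeIn l b) (a : V) :
    G.TriplexNodeIn (a :: l) b := by
  obtain ⟨t, ht, rfl, hpat⟩ := h
  refine ⟨t, ?_, rfl, hpat⟩
  match l, ht with
  | _ :: _ :: _ :: _, ht => exact List.mem_cons_of_mem _ ht

lemma triplexNodeIn_of_dir_of_not_dir {a b c : V} (r : List V) (hab : G.dir a b)
    (hbc : G.Link b c) (hnbc : ¬ G.dir b c) : G.TriplexNodeIn (a :: b :: c :: r) b := by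
  refine ⟨(a, b, c), List.mem_cons_self, rfl, ?_⟩
  rcases hbc with h | h | h
  · exact absurd h hnbc
  · exact Or.inl ⟨hab, h⟩
  · exact Or.inr (Or.inl ⟨hab, h⟩)

lemma IsAnterial.exists_triplexNodeIn_of_dir {A : Set V} (hA : G.IsAnterial A) {a b : V}
    {r : List V} (hab : G.dir a b) (hb : b ∉ A) (hr : (b :: r).IsChain G.Link)
    (hlast : ∀ w ∈ (b :: r).getLast?, w ∈ A) :
    ∃ c ∉ A, G.TriplexNodeIn (a :: b :: r) c := by
  induction r generalizing a b with
  | nil => exact absurd (hlast b rfl) hb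
  | cons c r ih =>
    obtain ⟨hbc, hr⟩ := List.isChain_cons_cons.mp hr
    by_cases hdir : G.dir b c
    · have hc : c ∉ A := fun hc => hb (hA (Or.inr hdir) hc)
      obtain ⟨d, hd, htd⟩ := ih hdir hc hr (by simpa only [List.getLast?_cons_cons] using hlast)
      exact ⟨d, hd, htd.cons a⟩
    · exact ⟨b, hb, triplexNodeIn_of_dir_of_not_dir r hab hbc hdir⟩

lemma IsAnterial.exists_triplexNodeIn {A : Set V} (hA : G.IsAnterial A) {l : List V}
    (hl : l.IsChain G.Link) (hhead : ∀ a ∈ l.head?, a ∈ A) (hlast : ∀ w ∈ l.getLast?, w ∈ A)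
    (hout : ∃ w ∈ l, w ∉ A) : ∃ c ∉ A, G.TriplexNodeIn l c := by
  induction l with
  | nil => simp at hout
  | cons a l ih =>
    have ha : a ∈ A := hhead a rfl
    match l, hl, hlast, hout, ih with
    | [], _, _, hout, _ => simp_all
    | b :: r, hl, hlast, hout, ih =>
      obtain ⟨hab, hr⟩ := List.isChain_cons_cons.mp hl
      by_cases hb : b ∈ A
      · have hout' : ∃ w ∈ b :: r, w ∉ A := by
          obtain ⟨w, hw, hwA⟩ := hout
          exact ⟨w, (List.mem_cons.mp hw).resolve_left (by rintro rfl; exact hwA ha), hwA⟩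
        obtain ⟨c, hc, htc⟩ := ih hr (by simpa using hb)
          (by simpa only [List.getLast?_cons_cons] using hlast) hout'
        exact ⟨c, hc, htc.cons a⟩
      · exact hA.exists_triplexNodeIn_of_dir (hA.dir_of_link hab ha hb) hb hr
          (by simpa only [List.getLast?_cons_cons] using hlast)

end MixedGraph

theorem amp_chain_outside_ant_blocked_general {V : Type*} (G : MixedGraph V)
    (u v : V) (ρ : List V)
    (hρ : G.IsChainBetween u v ρ) (hout : ¬ ∀ w ∈ ρ, w ∈ G.ant ({u} ∪ {v}))
    (S : Set V) (hS : S ⊆ G.ant ({u} ∪ {v}) \ {u, v}) :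
    ¬ G.ZOpen S ρ := by
  intro hopen
  obtain ⟨-, hchain, hhead, hlast⟩ := hρ
  have hA := G.isAnterial_ant ({u} ∪ {v})
  obtain ⟨c, hc, htc⟩ := hA.exists_triplexNodeIn hchain
    (fun a ha => G.mem_ant_of_mem (by simp_all)) (fun w hw => G.mem_ant_of_mem (by simp_all))
    (by simpa using hout)
  exact hc (hA.An_subset (fun s hs => (hS hs).1) (hopen.1 c htc))

/-- **Lemma 1.** Let `u` and `v` be two non-adjacent vertices of an AMP chain graph
`G`, and let `ρ` be a chain from `u` to `v` in `G`.  If `ρ` is not contained in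
`ant({u} ∪ {v})`, then for every subset `S` of `ant({u} ∪ {v}) \ {u, v}` the chain `ρ`
is not `S`-open (i.e. `ρ` is blocked by `S`). -/
theorem amp_chain_outside_ant_blocked {V : Type*} (G : MixedGraph V)
    (hG : G.IsAMPCG) (u v : V) (huv : u ≠ v) (hnadj : ¬ G.Link u v) (ρ : List V)
    (hρ : G.IsChainBetween u v ρ) (hout : ¬ ∀ w ∈ ρ, w ∈ G.ant ({u} ∪ {v}))
    (S : Set V) (hS : S ⊆ G.ant ({u} ∪ {v}) \ {u, v}) :
    ¬ G.ZOpen S ρ :=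
  amp_chain_outside_ant_blocked_general G u v ρ hρ hout S hS
end

section
/- Let G be an AMP chain graph on vertex set V, let Ḡ_V be an undirected independence graph for G, let Ḡ_V^t be a triangulation of Ḡ_V (a chordal graph on V containing all edges of Ḡ_V), and let T be a junction tree of the cliques of Ḡ_V^t. Then T is a p-separation tree for G. -/
/-!
In the triangulation `Ht`, every edge lies in a maximal clique, i.e. in a node of the junction
tree, and by running intersection the nodes on the two sides of a tree edge meet only inside
its separator `S`; so no edge of `Ht` leaves one side except through `S`, and `S` separates the
two sides in `Ht`, hence in its subgraph `U`. The independence-graph property of `U` turns this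
separation into p-separation.
-/

namespace SimpleGraph

variable {ι : Type*} {T : SimpleGraph ι}

lemma Reachable.deleteEdges_reachable_or {u v k : ι} (h : T.Reachable u k) :
    (T.deleteEdges {s(u, v)}).Reachable u k ∨ (T.deleteEdges {s(u, v)}).Reachable v k := by
  rw [reachable_iff_reflTransGen] at h
  induction h with
  | refl => exact Or.inl .rfl
  | @tail x y _ hxy ih =>
    by_cases he : s(x, y) = s(u, v)
    · rcases Sym2.eq_iff.mp he with ⟨-, rfl⟩ | ⟨-, rfl⟩
      · exact Or.inr .rfl
      · exact Or.inl .rfl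
    · have hxy' : (T.deleteEdges {s(u, v)}).Adj x y := by
        simpa only [deleteEdges_adj, Set.mem_singleton_iff] using ⟨hxy, he⟩
      exact ih.imp (·.trans hxy'.reachable) (·.trans hxy'.reachable)

end SimpleGraph

section JunctionTree

variable {V ι : Type*}

lemma subtreeUnion_inter_subset {T : SimpleGraph ι} (hT : T.IsTree) {C : ι → Set V}
    (hRIP : ∀ (i j k : ι) (p : T.Walk i j), p.IsPath → k ∈ p.support → C i ∩ C j ⊆ C k)
    {i j : ι} (hij : T.Adj i j) :
    subtreeUnion T C s(i, j) i ∩ subtreeUnion T C s(i, j) j ⊆ C i ∩ C j := by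
  rintro v ⟨hvi, hvj⟩
  simp only [subtreeUnion, Set.mem_iUnion, Set.mem_ofPred_eq] at hvi hvj
  obtain ⟨k, hik, hvk⟩ := hvi
  obtain ⟨l, hjl, hvl⟩ := hvj
  have hbridge : T.IsBridge s(i, j) :=
    SimpleGraph.isAcyclic_iff_forall_isBridge.mp hT.isAcyclic (T.mem_edgeSet.mpr hij)
  have hkl : ¬ (T.deleteEdges {s(i, j)}).Reachable k l := fun hkl =>
    SimpleGraph.isBridge_iff.mp hbridge (hik.trans (hkl.trans hjl.symm))
  obtain ⟨p, hp⟩ := (hT.connected k l).exists_isPath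
  have hedge : s(i, j) ∈ p.edges := p.mem_edges_of_not_reachable_deleteEdges hkl
  exact ⟨hRIP k l i p hp (p.fst_mem_support_of_mem_edges hedge) ⟨hvk, hvl⟩,
    hRIP k l j p hp (p.snd_mem_support_of_mem_edges hedge) ⟨hvk, hvl⟩⟩

lemma disjoint_subtreeUnion_sdiff {T : SimpleGraph ι} (hT : T.IsTree) {C : ι → Set V}
    (hRIP : ∀ (i j k : ι) (p : T.Walk i j), p.IsPath → k ∈ p.support → C i ∩ C j ⊆ C k)
    {i j : ι} (hij : T.Adj i j) :
    Disjoint (subtreeUnion T C s(i, j) i) (subtreeUnion T C s(i, j) j \ (C i ∩ C j)) :=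
  Set.disjoint_left.mpr fun _ hvi hvj =>
    hvj.2 (subtreeUnion_inter_subset hT hRIP hij ⟨hvi, hvj.1⟩)

lemma Separates.mono {adj adj' : V → V → Prop} (h : ∀ a b, adj a b → adj' a b)
    {X Y Z : Set V} (hsep : Separates adj' X Y Z) : Separates adj X Y Z :=
  fun x hx y hy l hl hlast hnd => hsep x hx y hy l (List.IsChain.imp h hl) hlast hnd

lemma separates_of_forall_adj_mem {adj : V → V → Prop} {A X Y Z : Set V} (hXA : X ⊆ A)
    (hAY : Disjoint A Y) (hclosed : ∀ a ∈ A \ Z, ∀ b, adj a b → b ∈ A) :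
    Separates adj X Y Z := by
  suffices h : ∀ (l : List V), ∀ x ∈ A, ∀ y ∈ Y, (x :: l).IsChain adj →
      (x :: l).getLast? = some y → ∃ w ∈ x :: l, w ∈ Z from
    fun x hx y hy l hl hlast _ => h l x (hXA hx) y hy hl hlast
  intro l
  induction l with
  | nil =>
    intro x hxA y hy _ hlast
    cases Option.some.inj hlast
    exact absurd hy (Set.disjoint_left.mp hAY hxA)
  | cons b l ih =>
    intro x hxA y hy hl hlast
    rw [List.isChain_cons_cons] at hl
    by_cases hxZ : x ∈ Z
    · exact ⟨x, List.mem_cons_self, hxZ⟩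
    · obtain ⟨w, hw, hwZ⟩ := ih b (hclosed x ⟨hxA, hxZ⟩ b hl.1) y hy hl.2 hlast
      exact ⟨w, List.mem_cons_of_mem x hw, hwZ⟩

variable {H : SimpleGraph V} {T : SimpleGraph ι} {C : ι → Set V}

lemma IsJunctionTree.exists_superset_of_isClique [Finite V] (hJT : IsJunctionTree H T C)
    {s : Set V} (hs : H.IsClique s) : ∃ k, s ⊆ C k := by
  obtain ⟨t, hst, hmax⟩ := Finite.exists_le_maximal hs
  obtain ⟨k, rfl⟩ := hJT.2.2.2.1 t hmax
  exact ⟨k, hst⟩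

lemma IsJunctionTree.separates [Finite V] (hJT : IsJunctionTree H T C) {i j : ι}
    (hij : T.Adj i j) :
    Separates H.Adj (subtreeUnion T C s(i, j) i \ (C i ∩ C j))
      (subtreeUnion T C s(i, j) j \ (C i ∩ C j)) (C i ∩ C j) := by
  have hinter := subtreeUnion_inter_subset hJT.1 hJT.2.2.2.2 hij
  refine separates_of_forall_adj_mem Set.sdiff_subset
    (disjoint_subtreeUnion_sdiff hJT.1 hJT.2.2.2.2 hij) ?_
  rintro a ⟨ha1, haS⟩ b hab
  obtain ⟨k, hk⟩ := hJT.exists_superset_of_isClique (SimpleGraph.isClique_pair.mpr fun _ => hab)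
  rcases (hJT.1.connected i k).deleteEdges_reachable_or (v := j) with hik | hjk
  · exact Set.mem_biUnion hik (hk (by simp))
  · exact absurd (hinter ⟨ha1, Set.mem_biUnion hjk (hk (by simp))⟩) haS

end JunctionTree

theorem junctionTree_isPSepTree_general {V ι : Type*} [Finite V]
    (G : MixedGraph V) (U Ht : SimpleGraph V) (hUIG : IsUIG G U)
    (hsub : U ≤ Ht) (T : SimpleGraph ι) (C : ι → Set V)
    (hJT : IsJunctionTree Ht T C) :
    IsPSepTree G T C := by
  refine ⟨hJT.1, fun v => ?_, fun i j hij => ?_⟩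
  · obtain ⟨k, hk⟩ := hJT.exists_superset_of_isClique (Ht.isClique_singleton v)
    exact ⟨k, hk rfl⟩
  · exact hUIG _ _ _
      ((disjoint_subtreeUnion_sdiff hJT.1 hJT.2.2.2.2 hij).mono_left Set.sdiff_subset)
      Set.disjoint_sdiff_left Set.disjoint_sdiff_left
      ((hJT.separates hij).mono fun _ _ h => hsub h)

/-- **Theorem 4.** Let `G` be an AMP chain graph on `V`, let `U` be an undirected
independence graph for `G`, let `Ht` be a triangulation of `U` (a chordal graph on
`V` containing all edges of `U`), and let `T` be a junction tree of the cliques of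
`Ht`.  Then `T` is a p-separation tree for `G`. -/
theorem junctionTree_isPSepTree {V ι : Type*} [Finite V] [Finite ι]
    (G : MixedGraph V) (hG : G.IsAMPCG) (U Ht : SimpleGraph V) (hUIG : IsUIG G U)
    (hsub : U ≤ Ht) (hchordal : IsChordal Ht) (T : SimpleGraph ι) (C : ι → Set V)
    (hJT : IsJunctionTree Ht T C) :
    IsPSepTree G T C :=
  junctionTree_isPSepTree_general G U Ht hUIG hsub T C hJT
end
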